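/- arXiv:1507.04516 — 6 statements merged into one kernel-verified Lean document; each statement's English description precedes it below -/
import Mathlib

section
/- Let F : X ⇉ Y be a set-valued mapping between metric spaces and let (x̄, ȳ) ∈ graph F. Then F is strongly metrically subregular at (x̄, ȳ) if and only if its steepest displacement rate satisfies cl↓F(x̄, ȳ) > 0. Moreover, whenever cl↓F(x̄, ȳ) > 0, the modulus of subregularity satisfies subreg F(x̄, ȳ) = 1 / cl↓F(x̄, ȳ) (with the convention 1/+∞ = 0). -/
open Filter Topology Metric Set ENNReal

/-- A set-valued mapping `F : X ⇉ Y` between metric spaces is *strongly metrically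
subregular* at `(xb, yb) ∈ graph F` if there exist `κ ≥ 0` and `r > 0` such that
`d(x, xb) ≤ κ · dist(yb, F x)` for all `x ∈ B(xb, r)`, with `dist(yb, ∅) = +∞`. -/
def IsStronglyMetricallySubregular {X Y : Type*} [MetricSpace X] [MetricSpace Y]
    (F : X → Set Y) (xb : X) (yb : Y) : Prop :=
  ∃ κ : ℝ, 0 ≤ κ ∧ ∃ r : ℝ, 0 < r ∧ ∀ x ∈ Metric.closedBall xb r,
    ENNReal.ofReal (dist x xb) ≤ ENNReal.ofReal κ * EMetric.infEdist yb (F x)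

/-- The modulus of subregularity: the infimum of all `κ ≥ 0` admitting some `r > 0`
as in the definition of strong metric subregularity. -/
noncomputable def subregMod {X Y : Type*} [MetricSpace X] [MetricSpace Y]
    (F : X → Set Y) (xb : X) (yb : Y) : ℝ :=
  sInf {κ : ℝ | 0 ≤ κ ∧ ∃ r : ℝ, 0 < r ∧ ∀ x ∈ Metric.closedBall xb r,
    ENNReal.ofReal (dist x xb) ≤ ENNReal.ofReal κ * EMetric.infEdist yb (F x)}

/-- The steepest displacement rate of `F` at `(xb, yb)`:
`liminf_{x → xb, x ≠ xb} dist(yb, F x) / d(x, xb)`. -/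
noncomputable def dispRate {X Y : Type*} [MetricSpace X] [MetricSpace Y]
    (F : X → Set Y) (xb : X) (yb : Y) : ℝ≥0∞ :=
  Filter.liminf (fun x => EMetric.infEdist yb (F x) / ENNReal.ofReal (dist x xb)) (𝓝[≠] xb)

/-- `F` is strongly metrically subregular at `(xb, yb) ∈ graph F`
iff its steepest displacement rate is positive; moreover, in that case the modulus of
subregularity equals the reciprocal of the steepest displacement rate (`1/∞ = 0`). -/
theorem strong_subreg_iff_dispRate_pos {X Y : Type*} [MetricSpace X] [MetricSpace Y]
    (F : X → Set Y) (xb : X) (yb : Y) (hgraph : yb ∈ F xb) :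
    (IsStronglyMetricallySubregular F xb yb ↔ 0 < dispRate F xb yb) ∧
    (0 < dispRate F xb yb →
      ENNReal.ofReal (subregMod F xb yb) = 1 / dispRate F xb yb) := by
  set K := {κ : ℝ | 0 ≤ κ ∧ ∃ r : ℝ, 0 < r ∧ ∀ x ∈ Metric.closedBall xb r,
    ENNReal.ofReal (dist x xb) ≤ ENNReal.ofReal κ * EMetric.infEdist yb (F x)} with hK
  set c := dispRate F xb yb with hc
  have hc' : c = Filter.liminf
      (fun x => EMetric.infEdist yb (F x) / ENNReal.ofReal (dist x xb)) (𝓝[≠] xb) := rfl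
  have hmod : subregMod F xb yb = sInf K := rfl
  -- L1 : every admissible κ bounds the rate from below by (ofReal κ)⁻¹
  have L1 : ∀ κ ∈ K, (ENNReal.ofReal κ)⁻¹ ≤ c := by
    rintro κ ⟨hκ0, r, hr, H⟩
    rw [hc']
    refine Filter.le_liminf_of_le (by isBoundedDefault) ?_
    rw [eventually_nhdsWithin_iff]
    filter_upwards [Metric.closedBall_mem_nhds xb hr] with x hx hne
    have hne' : x ≠ xb := hne
    have hd0 : ENNReal.ofReal (dist x xb) ≠ 0 := by
      simpa [ENNReal.ofReal_eq_zero, not_le] using dist_pos.2 hne'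
    have hdt : ENNReal.ofReal (dist x xb) ≠ ⊤ := ENNReal.ofReal_ne_top
    have h := H x hx
    rcases eq_or_lt_of_le hκ0 with h0 | hpos
    · exact absurd (by simpa [← h0] using h) hne'
    · rw [ENNReal.le_div_iff_mul_le (Or.inl hd0) (Or.inl hdt)]
      have hk0 : ENNReal.ofReal κ ≠ 0 := by
        simpa [ENNReal.ofReal_eq_zero, not_le] using hpos
      calc (ENNReal.ofReal κ)⁻¹ * ENNReal.ofReal (dist x xb)
          ≤ (ENNReal.ofReal κ)⁻¹ * (ENNReal.ofReal κ * EMetric.infEdist yb (F x)) :=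
            mul_le_mul_right h _
        _ = EMetric.infEdist yb (F x) := by
            rw [← mul_assoc, ENNReal.inv_mul_cancel hk0 ENNReal.ofReal_ne_top, one_mul]
  -- L2 : any b below the rate produces the admissible constant (b⁻¹).toReal
  have L2 : ∀ b : ℝ≥0∞, 0 < b → b < c → (b⁻¹).toReal ∈ K := by
    intro b hb0 hbc
    have hbt : b ≠ ⊤ := ne_top_of_lt hbc
    have hev : ∀ᶠ x in 𝓝[≠] xb,
        b < EMetric.infEdist yb (F x) / ENNReal.ofReal (dist x xb) := by
      rw [hc'] at hbc
      exact Filter.eventually_lt_of_lt_liminf hbc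
    rw [eventually_nhdsWithin_iff, Metric.nhds_basis_closedBall.eventually_iff] at hev
    obtain ⟨r, hr, H⟩ := hev
    refine ⟨ENNReal.toReal_nonneg, r, hr, fun x hx => ?_⟩
    rcases eq_or_ne x xb with rfl | hne
    · simp
    · have hd0 : ENNReal.ofReal (dist x xb) ≠ 0 := by
        simpa [ENNReal.ofReal_eq_zero, not_le] using dist_pos.2 hne
      have h := (H hx hne).le
      rw [ENNReal.le_div_iff_mul_le (Or.inl hd0) (Or.inl ENNReal.ofReal_ne_top)] at h
      have hb0' : b ≠ 0 := hb0.ne'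
      have hofr : ENNReal.ofReal ((b⁻¹).toReal) = b⁻¹ :=
        ENNReal.ofReal_toReal (by simp [hb0'])
      rw [hofr]
      calc ENNReal.ofReal (dist x xb) = b⁻¹ * (b * ENNReal.ofReal (dist x xb)) := by
            rw [← mul_assoc, ENNReal.inv_mul_cancel hb0' hbt, one_mul]
        _ ≤ b⁻¹ * EMetric.infEdist yb (F x) := mul_le_mul_right h _
  constructor
  · constructor
    · rintro ⟨κ, hκ0, hrest⟩
      exact lt_of_lt_of_le (ENNReal.inv_pos.2 ENNReal.ofReal_ne_top) (L1 κ ⟨hκ0, hrest⟩)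
    · intro hcpos
      obtain ⟨b, hb0, hbc⟩ := exists_between hcpos
      obtain ⟨h0, r, hr, H⟩ := L2 b hb0 hbc
      exact ⟨_, h0, r, hr, H⟩
  · intro hcpos
    have hcinv_ne_top : c⁻¹ ≠ ⊤ := by simp [hcpos.ne']
    have hbdd : BddBelow K := ⟨0, fun κ hκ => hκ.1⟩
    obtain ⟨b0, hb00, hb0c⟩ := exists_between hcpos
    have hKne : K.Nonempty := ⟨_, L2 b0 hb00 hb0c⟩
    have hge : (c⁻¹).toReal ≤ sInf K := by
      refine le_csInf hKne fun κ hκ => ?_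
      have h1 : c⁻¹ ≤ ENNReal.ofReal κ := by
        have h2 := L1 κ hκ
        calc c⁻¹ ≤ ((ENNReal.ofReal κ)⁻¹)⁻¹ := ENNReal.inv_le_inv.2 h2
          _ = ENNReal.ofReal κ := inv_inv _
      calc (c⁻¹).toReal ≤ (ENNReal.ofReal κ).toReal :=
            ENNReal.toReal_mono ENNReal.ofReal_ne_top h1
        _ = κ := ENNReal.toReal_ofReal hκ.1
    have hle : sInf K ≤ (c⁻¹).toReal := by
      refine le_of_forall_pos_le_add fun ε hε => ?_
      set b : ℝ≥0∞ := (c⁻¹ + ENNReal.ofReal ε)⁻¹ with hb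
      have hsum_ne_top : c⁻¹ + ENNReal.ofReal ε ≠ ⊤ := by
        simp [hcinv_ne_top, ENNReal.add_ne_top, ENNReal.ofReal_ne_top]
      have hb0 : 0 < b := ENNReal.inv_pos.2 hsum_ne_top
      have hbc : b < c := by
        rw [hb]
        conv_rhs => rw [← inv_inv c]
        exact ENNReal.inv_lt_inv.2
          (ENNReal.lt_add_right hcinv_ne_top (by simpa [ENNReal.ofReal_eq_zero, not_le] using hε))
      have hmem := L2 b hb0 hbc
      have heq : (b⁻¹).toReal = (c⁻¹).toReal + ε := by
        rw [hb, inv_inv, ENNReal.toReal_add hcinv_ne_top ENNReal.ofReal_ne_top,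
          ENNReal.toReal_ofReal hε.le]
      calc sInf K ≤ (b⁻¹).toReal := csInf_le hbdd hmem
        _ = (c⁻¹).toReal + ε := heq
    rw [hmod, le_antisymm hle hge, one_div, ENNReal.ofReal_toReal hcinv_ne_top]
end

section
/- Let (X, d) be a complete metric space and let φ : X → ℝ ∪ {+∞} be a proper lower semicontinuous function. Then the set of points at which φ is calm from below, i.e. {x ∈ dom φ : gr↓φ(x) > −∞}, is dense in dom φ. -/
/-!
Ekeland's variational principle, applied on a small closed ball around a point `x₀` of `dom φ`
to the real-valued truncation `min φ (φ x₀ + 1)`, produces nearby points `x̄` with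
`φ x̄ ≤ φ y + α d(y, x̄)` for all `y` close to `x̄`, hence `gr↓φ(x̄) ≥ -α`.
-/

open Filter Topology Metric Set

/-- The steepest descent rate of an extended-real-valued function `φ` at `xb`:
`liminf_{x → xb, x ≠ xb} (φ x − φ xb) / d(x, xb)`
(quotient written as product with the inverse of the positive real `d(x, xb)`). -/
noncomputable def steepestDescentRate {X : Type*} [MetricSpace X]
    (φ : X → EReal) (xb : X) : EReal :=
  Filter.liminf (fun x => (φ x - φ xb) * (((dist x xb)⁻¹ : ℝ) : EReal)) (𝓝[≠] xb)

lemma exists_forall_le_add_of_bddBelow {α : Type*} {f : α → ℝ} {T : Set α} (hne : T.Nonempty)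
    (hbdd : BddBelow (f '' T)) {ε : ℝ} (hε : 0 < ε) :
    ∃ y ∈ T, ∀ z ∈ T, f y ≤ f z + ε := by
  obtain ⟨_, ⟨y, hy, rfl⟩, hlt⟩ := Real.lt_sInf_add_pos (hne.image f) hε
  exact ⟨y, hy, fun z hz =>
    hlt.le.trans (by gcongr; exact csInf_le hbdd (mem_image_of_mem f hz))⟩

lemma LowerSemicontinuous.of_coe_ereal {X : Type*} [TopologicalSpace X] {g : X → ℝ}
    (hg : LowerSemicontinuous fun x => (g x : EReal)) : LowerSemicontinuous g :=
  fun x b hb => (hg x b (EReal.coe_lt_coe hb)).mono fun _ hy => EReal.coe_lt_coe_iff.mp hy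

lemma LowerSemicontinuous.exists_coe_eq_min {X : Type*} [TopologicalSpace X] {φ : X → EReal}
    (hφ : LowerSemicontinuous φ) (hnbot : ∀ x, φ x ≠ ⊥) (M : ℝ) :
    ∃ g : X → ℝ, LowerSemicontinuous g ∧ ∀ x, (g x : EReal) = min (φ x) M := by
  have hg : ∀ x, ((min (φ x) M).toReal : EReal) = min (φ x) M := fun x =>
    EReal.coe_toReal ((min_le_right _ _).trans_lt (EReal.coe_lt_top M)).ne
      (lt_min (hnbot x).bot_lt (EReal.bot_lt_coe M)).ne'
  exact ⟨_, .of_coe_ereal (by simpa only [hg] using hφ.inf lowerSemicontinuous_const), hg⟩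

section Ekeland

variable {X : Type*} [MetricSpace X] {g : X → ℝ} {α : ℝ} {S : Set X} {x y z : X}

def ekelandSet (g : X → ℝ) (α : ℝ) (S : Set X) (x : X) : Set X :=
  {y ∈ S | g y + α * dist y x ≤ g x}

lemma self_mem_ekelandSet (hx : x ∈ S) : x ∈ ekelandSet g α S x :=
  ⟨hx, by simp⟩

lemma ekelandSet_subset_of_mem (hα : 0 ≤ α) (hy : y ∈ ekelandSet g α S x) :
    ekelandSet g α S y ⊆ ekelandSet g α S x := fun z hz =>
  ⟨hz.1, by nlinarith [hy.2, hz.2, dist_triangle z y x]⟩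

lemma isClosed_ekelandSet (hS : IsClosed S) (hg : LowerSemicontinuous g) :
    IsClosed (ekelandSet g α S x) := by
  have hcont : Continuous fun y => α * dist y x := by fun_prop
  exact hS.inter <| (hg.add hcont.lowerSemicontinuous).isClosed_preimage (g x)

lemma mul_dist_le_of_mem_ekelandSet {w : X} {ε : ℝ} (hα : 0 ≤ α)
    (hx : x ∈ ekelandSet g α S w)
    (hmin : ∀ z ∈ ekelandSet g α S w, g x ≤ g z + ε) (hz : z ∈ ekelandSet g α S x) :
    α * dist z x ≤ ε := by
  linarith [hz.2, hmin z (ekelandSet_subset_of_mem hα hx hz)]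

lemma exists_seq_ekelandSet (hbdd : BddBelow (g '' S)) (hx : x ∈ S) :
    ∃ u : ℕ → X, u 0 = x ∧ ∀ n : ℕ, u (n + 1) ∈ ekelandSet g α S (u n) ∧
      ∀ z ∈ ekelandSet g α S (u n), g (u (n + 1)) ≤ g z + 1 / (n + 1) := by
  have step : ∀ n : ℕ, ∀ x ∈ S, ∃ y ∈ ekelandSet g α S x,
      ∀ z ∈ ekelandSet g α S x, g y ≤ g z + 1 / (n + 1) := fun n x hx =>
    exists_forall_le_add_of_bddBelow ⟨x, self_mem_ekelandSet hx⟩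
      (hbdd.mono (image_mono fun _ hy => hy.1)) Nat.one_div_pos_of_nat
  choose! next hnext_mem hnext_min using step
  let u : ℕ → X := fun n => Nat.rec x next n
  have hu : ∀ n, u n ∈ S := fun n => Nat.rec hx (fun n ih => (hnext_mem n _ ih).1) n
  exact ⟨u, rfl, fun n => ⟨hnext_mem n _ (hu n), hnext_min n _ (hu n)⟩⟩

/-- The point is the limit of successive almost-minimizers on the nested Ekeland sets, whose
radii shrink to zero. -/
lemma exists_mem_ekelandSet_subset_singleton (hS : IsComplete S) (hg : LowerSemicontinuous g)
    (hbdd : BddBelow (g '' S)) (hα : 0 < α) (hx : x ∈ S) :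
    ∃ xb ∈ ekelandSet g α S x, ekelandSet g α S xb ⊆ {xb} := by
  obtain ⟨u, rfl, hu⟩ := exists_seq_ekelandSet (α := α) hbdd hx
  have huS : ∀ n, u n ∈ S := by
    rintro (_ | n)
    exacts [hx, (hu n).1.1]
  have hanti : Antitone fun n => ekelandSet g α S (u n) :=
    antitone_nat_of_succ_le fun n => ekelandSet_subset_of_mem hα.le (hu n).1
  have hu_mem : ∀ n m, n ≤ m → u m ∈ ekelandSet g α S (u n) := fun n m h =>
    hanti h (self_mem_ekelandSet (huS m))
  have hsmall : ∀ n : ℕ, ∀ z ∈ ekelandSet g α S (u (n + 1)),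
      dist z (u (n + 1)) ≤ 1 / (n + 1) / α :=
    fun n z hz => by
      rw [le_div_iff₀ hα, mul_comm]
      exact mul_dist_le_of_mem_ekelandSet hα.le (hu n).1 (hu n).2 hz
  have hr : Tendsto (fun n : ℕ => 1 / ((n : ℝ) + 1) / α) atTop (𝓝 0) := by
    simpa using tendsto_one_div_add_atTop_nhds_zero_nat.div_const α
  have hcauchy : CauchySeq u := by
    refine Metric.cauchySeq_iff'.2 fun ε hε => ?_
    obtain ⟨n, hn⟩ := (hr.eventually (gt_mem_nhds hε)).exists
    exact ⟨n + 1, fun m hm => (hsmall n _ (hu_mem _ _ hm)).trans_lt hn⟩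
  obtain ⟨xb, -, hxb⟩ := cauchySeq_tendsto_of_isComplete hS huS hcauchy
  have hxb_mem : ∀ n, xb ∈ ekelandSet g α S (u n) := fun n =>
    (isClosed_ekelandSet hS.isClosed hg).mem_of_tendsto hxb
      ((eventually_ge_atTop n).mono (hu_mem n))
  refine ⟨xb, hxb_mem 0, fun y hy => ?_⟩
  have hy_mem : ∀ n : ℕ, y ∈ ekelandSet g α S (u (n + 1)) := fun n =>
    ekelandSet_subset_of_mem hα.le (hxb_mem (n + 1)) hy
  have hlim : Tendsto (fun n => u (n + 1)) atTop (𝓝 y) :=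
    tendsto_iff_dist_tendsto_zero.2 <| squeeze_zero (fun _ => dist_nonneg)
      (fun n => (dist_comm _ y).trans_le (hsmall n y (hy_mem n))) hr
  exact tendsto_nhds_unique hlim (hxb.comp (tendsto_add_atTop_nat 1))

theorem ekeland_variational_principle (hS : IsComplete S) (hg : LowerSemicontinuous g)
    (hbdd : BddBelow (g '' S)) (hα : 0 < α) (hx : x ∈ S) :
    ∃ xb ∈ S, g xb + α * dist xb x ≤ g x ∧ ∀ y ∈ S, g xb ≤ g y + α * dist y xb := by
  obtain ⟨xb, ⟨hxbS, hxb⟩, hsub⟩ := exists_mem_ekelandSet_subset_singleton hS hg hbdd hα hx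
  refine ⟨xb, hxbS, hxb, fun y hy => ?_⟩
  by_contra! hlt
  obtain rfl : y = xb := hsub ⟨hy, hlt.le⟩
  simp at hlt

theorem LowerSemicontinuous.exists_dist_lt_eventually_le_add_dist [CompleteSpace X]
    (hg : LowerSemicontinuous g) (x₀ : X) {ε : ℝ} (hε : 0 < ε) :
    ∃ xb, dist xb x₀ < ε ∧ g xb ≤ g x₀ ∧
      ∃ α, ∀ᶠ y in 𝓝 xb, g xb ≤ g y + α * dist y xb := by
  obtain ⟨δ, hδ, hlb⟩ := Metric.eventually_nhds_iff.1 (hg x₀ (g x₀ - 1) (sub_one_lt _))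
  obtain ⟨r, hr, hrε, hrδ⟩ : ∃ r, 0 < r ∧ r ≤ ε ∧ r < δ :=
    ⟨min ε (δ / 2), lt_min hε (half_pos hδ), min_le_left _ _,
      (min_le_right _ _).trans_lt (half_lt_self hδ)⟩
  have hr_lb : ∀ y ∈ closedBall x₀ r, g x₀ - 1 < g y := fun y hy =>
    hlb ((mem_closedBall.1 hy).trans_lt hrδ)
  obtain ⟨xb, hxbS, hxb, hmin⟩ :=
    ekeland_variational_principle isClosed_closedBall.isComplete hg
    ⟨g x₀ - 1, forall_mem_image.2 fun y hy => (hr_lb y hy).le⟩ (inv_pos.2 hr)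
    (mem_closedBall_self hr.le)
  have hdist : dist xb x₀ < r := by
    have : r⁻¹ * dist xb x₀ < 1 := by linarith [hr_lb xb hxbS]
    rwa [inv_mul_lt_iff₀ hr, mul_one] at this
  refine ⟨xb, hdist.trans_le hrε,
    by nlinarith [dist_nonneg (x := xb) (y := x₀), inv_pos.2 hr], r⁻¹, ?_⟩
  filter_upwards [mem_of_superset (isOpen_ball.mem_nhds hdist) ball_subset_closedBall]
    with y hy using hmin y hy

end Ekeland

lemma neg_le_steepestDescentRate {X : Type*} [MetricSpace X] {φ : X → EReal} {xb : X}
    {r α : ℝ}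
    (hr : φ xb = r) (h : ∀ᶠ y in 𝓝 xb, ((r - α * dist y xb : ℝ) : EReal) ≤ φ y) :
    ((-α : ℝ) : EReal) ≤ steepestDescentRate φ xb := by
  unfold steepestDescentRate
  refine le_liminf_of_le (by isBoundedDefault) ?_
  filter_upwards [nhdsWithin_le_nhds h, self_mem_nhdsWithin] with y hy hne
  have hd : dist y xb ≠ 0 := dist_ne_zero.2 hne
  calc ((-α : ℝ) : EReal)
      = ((r - α * dist y xb : ℝ) - (r : EReal)) * (((dist y xb)⁻¹ : ℝ) : EReal) := by
        rw [← EReal.coe_sub, ← EReal.coe_mul]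
        congr 1
        field_simp
        ring
    _ ≤ (φ y - φ xb) * (((dist y xb)⁻¹ : ℝ) : EReal) := by
        rw [hr]
        exact mul_le_mul_of_nonneg_right (EReal.sub_le_sub hy le_rfl)
          (EReal.coe_nonneg.2 (inv_nonneg.2 dist_nonneg))

theorem dense_calm_from_below_general {X : Type*} [MetricSpace X] [CompleteSpace X]
    (φ : X → EReal) (hnbot : ∀ x, φ x ≠ ⊥)
    (hlsc : LowerSemicontinuous φ) :
    {x | φ x ≠ ⊤} ⊆
      closure {x | φ x ≠ ⊤ ∧ ⊥ < steepestDescentRate φ x} := by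
  intro x₀ hx₀
  refine Metric.mem_closure_iff.2 fun ε hε => ?_
  obtain ⟨a, ha⟩ : ∃ a : ℝ, φ x₀ = a :=
    ⟨_, (EReal.coe_toReal hx₀ (hnbot x₀)).symm⟩
  obtain ⟨g, hg_lsc, hg⟩ := hlsc.exists_coe_eq_min hnbot (a + 1)
  have hgx₀ : g x₀ = a :=
    EReal.coe_injective <| by rw [hg, ha, min_eq_left (EReal.coe_le_coe (by linarith))]
  obtain ⟨xb, hxb, hgxb, α, hcalm⟩ := hg_lsc.exists_dist_lt_eventually_le_add_dist x₀ hε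
  have hφxb : φ xb = g xb := by
    rw [hg, min_eq_left]
    by_contra! h
    have : g xb = a + 1 := EReal.coe_injective (by rw [hg, min_eq_right h.le])
    linarith
  have hφ_calm : ∀ᶠ y in 𝓝 xb, ((g xb - α * dist y xb : ℝ) : EReal) ≤ φ y := by
    filter_upwards [hcalm] with y hy
    calc ((g xb - α * dist y xb : ℝ) : EReal) ≤ g y := EReal.coe_le_coe (by linarith)
      _ ≤ φ y := hg y ▸ min_le_left _ _
  refine ⟨xb, ⟨by simp [hφxb], (EReal.bot_lt_coe _).trans_le
    (neg_le_steepestDescentRate hφxb hφ_calm)⟩, ?_⟩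
  rwa [dist_comm]

/-- For a proper lower semicontinuous function
`φ : X → ℝ ∪ {+∞}` on a complete metric space, the set of points of `dom φ` at which
`φ` is calm from below (i.e. has steepest descent rate `> −∞`) is dense in `dom φ`. -/
theorem dense_calm_from_below {X : Type*} [MetricSpace X] [CompleteSpace X]
    (φ : X → EReal) (hnbot : ∀ x, φ x ≠ ⊥) (hproper : ∃ x, φ x ≠ ⊤)
    (hlsc : LowerSemicontinuous φ) :
    {x | φ x ≠ ⊤} ⊆
      closure {x | φ x ≠ ⊤ ∧ ⊥ < steepestDescentRate φ x} :=
  dense_calm_from_below_general φ hnbot hlsc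
end

section
/- Let F : X ⇉ Y be a set-valued mapping between metric spaces, g : Z → X a mapping defined on a metric space, z̄ ∈ Z and (g(z̄), ȳ) ∈ graph F. Suppose that (i) g is continuous at z̄ and strongly metrically subregular at z̄, and (ii) F is strongly metrically subregular at (g(z̄), ȳ). Then the composition F ∘ g : Z ⇉ Y, (F ∘ g)(z) = F(g(z)), is strongly metrically subregular at (z̄, ȳ), and subreg (F ∘ g)(z̄, ȳ) ≤ subreg g(z̄) · subreg F(g(z̄), ȳ). -/
open Filter Topology Metric Set ENNReal

/-- Strong metric subregularity of a single-valued map between metric spaces at `zb`. -/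
def IsStronglyMetricallySubregularMap {Z X : Type*} [MetricSpace Z] [MetricSpace X]
    (g : Z → X) (zb : Z) : Prop :=
  ∃ κ : ℝ, 0 ≤ κ ∧ ∃ r : ℝ, 0 < r ∧ ∀ z ∈ Metric.closedBall zb r,
    dist z zb ≤ κ * dist (g z) (g zb)

/-- The modulus of subregularity of a single-valued map between metric spaces. -/
noncomputable def subregModMap {Z X : Type*} [MetricSpace Z] [MetricSpace X]
    (g : Z → X) (zb : Z) : ℝ :=
  sInf {κ : ℝ | 0 ≤ κ ∧ ∃ r : ℝ, 0 < r ∧ ∀ z ∈ Metric.closedBall zb r,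
    dist z zb ≤ κ * dist (g z) (g zb)}

/-- If `g` is continuous at `zb` and strongly metrically subregular
at `zb`, and `F` is strongly metrically subregular at `(g zb, yb)`, then the composition
`F ∘ g` is strongly metrically subregular at `(zb, yb)` with
`subreg (F ∘ g)(zb, yb) ≤ subreg g(zb) · subreg F(g zb, yb)`. -/
theorem strong_subreg_comp {X Y Z : Type*}
    [MetricSpace X] [MetricSpace Y] [MetricSpace Z]
    (F : X → Set Y) (g : Z → X) (zb : Z) (yb : Y) (hgraph : yb ∈ F (g zb))
    (hgcont : ContinuousAt g zb)
    (hgsub : IsStronglyMetricallySubregularMap g zb)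
    (hFsub : IsStronglyMetricallySubregular F (g zb) yb) :
    IsStronglyMetricallySubregular (fun z => F (g z)) zb yb ∧
    subregMod (fun z => F (g z)) zb yb ≤ subregModMap g zb * subregMod F (g zb) yb := by
  -- key: product of constants works for the composition
  have key : ∀ a ∈ {κ : ℝ | 0 ≤ κ ∧ ∃ r : ℝ, 0 < r ∧ ∀ z ∈ Metric.closedBall zb r,
      dist z zb ≤ κ * dist (g z) (g zb)},
      ∀ b ∈ {κ : ℝ | 0 ≤ κ ∧ ∃ r : ℝ, 0 < r ∧ ∀ x ∈ Metric.closedBall (g zb) r,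
        ENNReal.ofReal (dist x (g zb)) ≤ ENNReal.ofReal κ * EMetric.infEdist yb (F x)},
      (a * b) ∈ {κ : ℝ | 0 ≤ κ ∧ ∃ r : ℝ, 0 < r ∧ ∀ z ∈ Metric.closedBall zb r,
        ENNReal.ofReal (dist z zb) ≤ ENNReal.ofReal κ * EMetric.infEdist yb (F (g z))} := by
    rintro a ⟨ha0, rg, hrg, hg⟩ b ⟨hb0, rF, hrF, hF⟩
    refine ⟨mul_nonneg ha0 hb0, ?_⟩
    obtain ⟨δ, hδ, hcont⟩ := Metric.continuousAt_iff.mp hgcont rF hrF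
    refine ⟨min rg (δ/2), lt_min hrg (by linarith), fun z hz => ?_⟩
    rw [Metric.mem_closedBall] at hz
    have hz1 : dist z zb ≤ rg := hz.trans (min_le_left _ _)
    have hz2 : dist z zb < δ := lt_of_le_of_lt (hz.trans (min_le_right _ _)) (by linarith)
    have hgx : g z ∈ Metric.closedBall (g zb) rF :=
      Metric.mem_closedBall.mpr (le_of_lt (hcont hz2))
    calc ENNReal.ofReal (dist z zb)
        ≤ ENNReal.ofReal (a * dist (g z) (g zb)) :=
          ENNReal.ofReal_le_ofReal (hg z (Metric.mem_closedBall.mpr hz1))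
      _ = ENNReal.ofReal a * ENNReal.ofReal (dist (g z) (g zb)) := ENNReal.ofReal_mul ha0
      _ ≤ ENNReal.ofReal a * (ENNReal.ofReal b * EMetric.infEdist yb (F (g z))) :=
          mul_le_mul_right (hF _ hgx) _
      _ = ENNReal.ofReal (a * b) * EMetric.infEdist yb (F (g z)) := by
          rw [ENNReal.ofReal_mul ha0, mul_assoc]
  set Sg := {κ : ℝ | 0 ≤ κ ∧ ∃ r : ℝ, 0 < r ∧ ∀ z ∈ Metric.closedBall zb r,
      dist z zb ≤ κ * dist (g z) (g zb)} with hSg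
  set SF := {κ : ℝ | 0 ≤ κ ∧ ∃ r : ℝ, 0 < r ∧ ∀ x ∈ Metric.closedBall (g zb) r,
      ENNReal.ofReal (dist x (g zb)) ≤ ENNReal.ofReal κ * EMetric.infEdist yb (F x)} with hSF
  set Sc := {κ : ℝ | 0 ≤ κ ∧ ∃ r : ℝ, 0 < r ∧ ∀ z ∈ Metric.closedBall zb r,
      ENNReal.ofReal (dist z zb) ≤ ENNReal.ofReal κ * EMetric.infEdist yb (F (g z))} with hSc
  obtain ⟨κg, hκg0, hκg⟩ : ∃ a, 0 ≤ a ∧ a ∈ Sg := by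
    obtain ⟨a, ha0, h⟩ := hgsub; exact ⟨a, ha0, ha0, h⟩
  obtain ⟨κF, hκF0, hκF⟩ : ∃ b, 0 ≤ b ∧ b ∈ SF := by
    obtain ⟨b, hb0, h⟩ := hFsub; exact ⟨b, hb0, hb0, h⟩
  have hSgne : Sg.Nonempty := ⟨κg, hκg⟩
  have hSFne : SF.Nonempty := ⟨κF, hκF⟩
  have hScne : Sc.Nonempty := ⟨κg * κF, key _ hκg _ hκF⟩
  have hbdSg : BddBelow Sg := ⟨0, fun x hx => hx.1⟩
  have hbdSF : BddBelow SF := ⟨0, fun x hx => hx.1⟩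
  have hbdSc : BddBelow Sc := ⟨0, fun x hx => hx.1⟩
  constructor
  · obtain ⟨h0, r, hr, h⟩ := key _ hκg _ hκF
    exact ⟨κg * κF, h0, r, hr, h⟩
  -- modulus inequality
  show sInf Sc ≤ sInf Sg * sInf SF
  have hmain : ∀ a ∈ Sg, ∀ b ∈ SF, sInf Sc ≤ a * b :=
    fun a ha b hb => csInf_le hbdSc (key _ ha _ hb)
  have hB0 : 0 ≤ sInf SF := le_csInf hSFne (fun b hb => hb.1)
  have step1 : ∀ a ∈ Sg, sInf Sc ≤ a * sInf SF := by
    intro a ha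
    rcases eq_or_lt_of_le ha.1 with h | h
    · have := hmain a ha κF hκF
      rw [← h] at this ⊢
      simpa using this
    · rw [mul_comm, ← div_le_iff₀ h]
      exact le_csInf hSFne fun b hb => by
        rw [div_le_iff₀ h, mul_comm]; exact hmain a ha b hb
  rcases eq_or_lt_of_le hB0 with h | h
  · have := step1 κg hκg
    rw [← h] at this ⊢
    simpa using this
  · rw [← div_le_iff₀ h]
    exact le_csInf hSgne fun a ha => by
      rw [div_le_iff₀ h]; exact step1 a ha
end

section
/- Let F : X ⇉ Y be a set-valued mapping from a metric space X to a linear metric space Y whose metric is shift-invariant (d(y₁ + v, y₂ + v) = d(y₁, y₂) for all y₁, y₂, v ∈ Y). If F is strongly metrically subregular at (x̄, ȳ) ∈ graph F and g : X → Y is a mapping with subreg F(x̄, ȳ) · clm g(x̄) < 1, then the set-valued mapping F + g : x ⇉ F(x) + g(x) is strongly metrically subregular at (x̄, ȳ + g(x̄)) and subreg (F + g)(x̄, ȳ + g(x̄)) ≤ subreg F(x̄, ȳ) / (1 − subreg F(x̄, ȳ) · clm g(x̄)). -/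
open Filter Topology Metric Set ENNReal Pointwise

/-- Calmness of a single-valued map between metric spaces at `xb`. -/
def IsCalmMap {X Y : Type*} [MetricSpace X] [MetricSpace Y]
    (g : X → Y) (xb : X) : Prop :=
  ∃ κ : ℝ, 0 ≤ κ ∧ ∃ r : ℝ, 0 < r ∧ ∀ x ∈ Metric.closedBall xb r,
    dist (g x) (g xb) ≤ κ * dist x xb

/-- The calmness modulus of a single-valued map between metric spaces at `xb`. -/
noncomputable def clmModMap {X Y : Type*} [MetricSpace X] [MetricSpace Y]
    (g : X → Y) (xb : X) : ℝ :=
  sInf {κ : ℝ | 0 ≤ κ ∧ ∃ r : ℝ, 0 < r ∧ ∀ x ∈ Metric.closedBall xb r,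
    dist (g x) (g xb) ≤ κ * dist x xb}


section aux

variable {X Y : Type*} [MetricSpace X] [AddCommGroup Y] [MetricSpace Y]

lemma shift_infEdist (hshift : ∀ y₁ y₂ v : Y, dist (y₁ + v) (y₂ + v) = dist y₁ y₂)
    (y a : Y) (s : Set Y) :
    EMetric.infEdist (y + a) (s + ({a} : Set Y)) = EMetric.infEdist y s := by
  have hiso : Isometry (fun z : Y => z + a) :=
    Isometry.of_dist_eq (fun z w => hshift z w a)
  have himg : s + ({a} : Set Y) = (fun z : Y => z + a) '' s := by
    simp [Set.add_singleton]
  rw [himg]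
  exact EMetric.infEdist_image hiso

lemma mono_frac (a b a' b' : ℝ) (ha : 0 ≤ a) (hb : 0 ≤ b) (haa : a ≤ a') (hbb : b ≤ b')
    (h1 : a' * b' < 1) : a / (1 - a * b) ≤ a' / (1 - a' * b') := by
  have h2 : a * b ≤ a' * b' := mul_le_mul haa hbb hb (le_trans ha haa)
  have h3 : 0 < 1 - a' * b' := by linarith
  have h4 : 0 < 1 - a * b := by linarith
  rw [div_le_div_iff₀ h4 h3]
  nlinarith

lemma key_lemma (hshift : ∀ y₁ y₂ v : Y, dist (y₁ + v) (y₂ + v) = dist y₁ y₂)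
    (F : X → Set Y) (xb : X) (yb : Y) (g : X → Y) (κ lam r s : ℝ)
    (hκ : 0 ≤ κ) (hlam : 0 ≤ lam) (hr : 0 < r) (hs : 0 < s) (hκlam : κ * lam < 1)
    (hF : ∀ x ∈ Metric.closedBall xb r,
      ENNReal.ofReal (dist x xb) ≤ ENNReal.ofReal κ * EMetric.infEdist yb (F x))
    (hg : ∀ x ∈ Metric.closedBall xb s, dist (g x) (g xb) ≤ lam * dist x xb) :
    (κ / (1 - κ * lam)) ∈ {κ' : ℝ | 0 ≤ κ' ∧ ∃ r : ℝ, 0 < r ∧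
      ∀ x ∈ Metric.closedBall xb r, ENNReal.ofReal (dist x xb) ≤
        ENNReal.ofReal κ' * EMetric.infEdist (yb + g xb) (F x + ({g x} : Set Y))} := by
  have hden : 0 < 1 - κ * lam := by linarith
  refine ⟨by positivity, min r s, lt_min hr hs, fun x hx => ?_⟩
  have hxr : x ∈ Metric.closedBall xb r :=
    Metric.closedBall_subset_closedBall (min_le_left r s) hx
  have hxs : x ∈ Metric.closedBall xb s :=
    Metric.closedBall_subset_closedBall (min_le_right r s) hx
  set d := dist x xb with hd
  have hd0 : 0 ≤ d := dist_nonneg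
  -- the shifted inf distance
  set E' := EMetric.infEdist (yb + g xb) (F x + ({g x} : Set Y)) with hE'def
  have hshiftE : E' = EMetric.infEdist (yb + g xb - g x) (F x) := by
    have h := shift_infEdist hshift (yb + g xb - g x) (g x) (F x)
    rw [show yb + g xb - g x + g x = yb + g xb by abel] at h
    exact h
  -- distance from yb to the shifted point
  have hdist_w : dist yb (yb + g xb - g x) = dist (g x) (g xb) := by
    have h1 := hshift 0 (g xb - g x) yb
    have h2 := hshift 0 (g xb - g x) (g x)
    simp only [zero_add] at h1 h2
    calc dist yb (yb + g xb - g x) = dist 0 (g xb - g x) := by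
          rw [show yb + g xb - g x = g xb - g x + yb by abel]; exact h1
      _ = dist (g x) (g xb) := by
          rw [← h2]; congr 1; abel
  have hchain : ENNReal.ofReal d ≤ ENNReal.ofReal κ * (E' + ENNReal.ofReal (lam * d)) := by
    calc ENNReal.ofReal d ≤ ENNReal.ofReal κ * EMetric.infEdist yb (F x) := hF x hxr
      _ ≤ ENNReal.ofReal κ * (EMetric.infEdist (yb + g xb - g x) (F x)
            + edist yb (yb + g xb - g x)) := by
          gcongr
          exact EMetric.infEdist_le_infEdist_add_edist
      _ ≤ ENNReal.ofReal κ * (E' + ENNReal.ofReal (lam * d)) := by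
          gcongr
          · rw [hshiftE]
          · rw [edist_dist, hdist_w]
            exact ENNReal.ofReal_le_ofReal (hg x hxs)
  rcases eq_or_lt_of_le hκ with hκ0 | hκpos
  · -- κ = 0
    have hx0 : x = xb := by
      have h := hF x hxr
      rw [← hκ0] at h
      simpa using h
    simp [hd, hx0]
  by_cases htop : E' = ⊤
  · rw [htop, ENNReal.mul_top]
    · exact le_top
    · simp only [ne_eq, ENNReal.ofReal_eq_zero, not_le]
      positivity
  · -- finite case
    set e := E'.toReal with he
    have he0 : 0 ≤ e := ENNReal.toReal_nonneg
    have hEe : E' = ENNReal.ofReal e := (ENNReal.ofReal_toReal htop).symm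
    have hreal : d ≤ κ * (e + lam * d) := by
      have h := hchain
      rw [hEe, ← ENNReal.ofReal_add he0 (by positivity), ← ENNReal.ofReal_mul hκ] at h
      exact (ENNReal.ofReal_le_ofReal_iff (by positivity)).mp h
    have hfinal : d ≤ (κ / (1 - κ * lam)) * e := by
      rw [div_mul_eq_mul_div, le_div_iff₀ hden]
      nlinarith
    rw [hEe, ← ENNReal.ofReal_mul (by positivity)]
    exact ENNReal.ofReal_le_ofReal hfinal

end aux

/-- Persistence of strong metric subregularity under calm additive
single-valued perturbations, in a linear metric space `Y` with shift-invariant metric,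
with the modulus estimate `subreg(F+g) ≤ subreg F / (1 − subreg F · clm g)`. -/
theorem strong_subreg_additive_perturbation {X Y : Type*} [MetricSpace X]
    [AddCommGroup Y] [Module ℝ Y] [MetricSpace Y]
    (hshift : ∀ y₁ y₂ v : Y, dist (y₁ + v) (y₂ + v) = dist y₁ y₂)
    (F : X → Set Y) (xb : X) (yb : Y) (hgraph : yb ∈ F xb)
    (hF : IsStronglyMetricallySubregular F xb yb)
    (g : X → Y) (hg : IsCalmMap g xb)
    (hsmall : subregMod F xb yb * clmModMap g xb < 1) :
    IsStronglyMetricallySubregular (fun x => F x + ({g x} : Set Y)) xb (yb + g xb) ∧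
    subregMod (fun x => F x + ({g x} : Set Y)) xb (yb + g xb) ≤
      subregMod F xb yb / (1 - subregMod F xb yb * clmModMap g xb) := by
  classical
  set SF := {κ : ℝ | 0 ≤ κ ∧ ∃ r : ℝ, 0 < r ∧ ∀ x ∈ Metric.closedBall xb r,
    ENNReal.ofReal (dist x xb) ≤ ENNReal.ofReal κ * EMetric.infEdist yb (F x)} with hSF
  set Sg := {κ : ℝ | 0 ≤ κ ∧ ∃ r : ℝ, 0 < r ∧ ∀ x ∈ Metric.closedBall xb r,
    dist (g x) (g xb) ≤ κ * dist x xb} with hSg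
  set S' := {κ' : ℝ | 0 ≤ κ' ∧ ∃ r : ℝ, 0 < r ∧
      ∀ x ∈ Metric.closedBall xb r, ENNReal.ofReal (dist x xb) ≤
        ENNReal.ofReal κ' * EMetric.infEdist (yb + g xb)
          ((fun x => F x + ({g x} : Set Y)) x)} with hS'
  have hSFne : SF.Nonempty := hF
  have hSgne : Sg.Nonempty := hg
  have hSFbdd : BddBelow SF := ⟨0, fun κ hκ => hκ.1⟩
  have hSgbdd : BddBelow Sg := ⟨0, fun κ hκ => hκ.1⟩
  set κ₀ := subregMod F xb yb with hκ₀def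
  set lam₀ := clmModMap g xb with hlam₀def
  have hκ₀eq : κ₀ = sInf SF := rfl
  have hlam₀eq : lam₀ = sInf Sg := rfl
  have hκ₀0 : 0 ≤ κ₀ := Real.sInf_nonneg (fun κ hκ => hκ.1)
  have hlam₀0 : 0 ≤ lam₀ := Real.sInf_nonneg (fun κ hκ => hκ.1)
  have hD : 0 < 1 - κ₀ * lam₀ := by linarith
  -- main: for every δ > 0 with (κ₀+δ)*(lam₀+δ) < 1, there is κ' ∈ S' with bound
  have main : ∀ δ : ℝ, 0 < δ → (κ₀ + δ) * (lam₀ + δ) < 1 →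
      ∃ κ' ∈ S', κ' ≤ (κ₀ + δ) / (1 - (κ₀ + δ) * (lam₀ + δ)) := by
    intro δ hδ hδ1
    obtain ⟨κ, hκmem, hκlt⟩ := (csInf_lt_iff hSFbdd hSFne).mp
      (show sInf SF < κ₀ + δ by rw [← hκ₀eq]; linarith)
    obtain ⟨lam, hlammem, hlamlt⟩ := (csInf_lt_iff hSgbdd hSgne).mp
      (show sInf Sg < lam₀ + δ by rw [← hlam₀eq]; linarith)
    obtain ⟨hκ0, r, hr, hFr⟩ := hκmem
    obtain ⟨hlam0, s, hs, hgs⟩ := hlammem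
    have hκlam : κ * lam < 1 :=
      lt_of_le_of_lt (mul_le_mul hκlt.le hlamlt.le hlam0 (by linarith)) hδ1
    refine ⟨κ / (1 - κ * lam),
      key_lemma hshift F xb yb g κ lam r s hκ0 hlam0 hr hs hκlam hFr hgs, ?_⟩
    exact mono_frac κ lam (κ₀ + δ) (lam₀ + δ) hκ0 hlam0 hκlt.le hlamlt.le hδ1
  -- existence part: explicit δ
  have hδex : ∃ δ : ℝ, 0 < δ ∧ (κ₀ + δ) * (lam₀ + δ) < 1 := by
    refine ⟨min 1 ((1 - κ₀ * lam₀) / (κ₀ + lam₀ + 2)), ?_, ?_⟩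
    · exact lt_min one_pos (by positivity)
    · set δ := min 1 ((1 - κ₀ * lam₀) / (κ₀ + lam₀ + 2)) with hδ
      have h1 : δ ≤ 1 := min_le_left _ _
      have h2 : δ ≤ (1 - κ₀ * lam₀) / (κ₀ + lam₀ + 2) := min_le_right _ _
      have h3 : 0 < δ := lt_min one_pos (by positivity)
      have h4 : δ * (κ₀ + lam₀ + 2) ≤ 1 - κ₀ * lam₀ := by
        rw [← le_div_iff₀ (by positivity)]; exact h2
      nlinarith
  obtain ⟨δ₀, hδ₀, hδ₀1⟩ := hδex
  obtain ⟨κ'₀, hκ'₀mem, _⟩ := main δ₀ hδ₀ hδ₀1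
  have hS'ne : S'.Nonempty := ⟨κ'₀, hκ'₀mem⟩
  have hS'bdd : BddBelow S' := ⟨0, fun κ hκ => hκ.1⟩
  constructor
  · exact ⟨κ'₀, hκ'₀mem.1, hκ'₀mem.2⟩
  · -- modulus bound
    refine le_of_forall_gt_imp_ge_of_dense (fun c hc => ?_)
    -- continuity: find δ with f δ < c and product < 1
    have hcont : ContinuousAt (fun δ : ℝ =>
        (κ₀ + δ) / (1 - (κ₀ + δ) * (lam₀ + δ))) 0 := by
      apply ContinuousAt.div (by fun_prop) (by fun_prop)
      simp only [add_zero]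
      linarith
    have hval : (fun δ : ℝ => (κ₀ + δ) / (1 - (κ₀ + δ) * (lam₀ + δ))) 0
        = κ₀ / (1 - κ₀ * lam₀) := by simp
    have hev1 : ∀ᶠ δ : ℝ in 𝓝 0,
        (κ₀ + δ) / (1 - (κ₀ + δ) * (lam₀ + δ)) < c := by
      have h := hcont.tendsto
      simp only [add_zero] at h
      exact h (Iio_mem_nhds hc)
    have hcont2 : ContinuousAt (fun δ : ℝ => (κ₀ + δ) * (lam₀ + δ)) 0 := by fun_prop
    have hev2 : ∀ᶠ δ : ℝ in 𝓝 0, (κ₀ + δ) * (lam₀ + δ) < 1 := by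
      have := hcont2.tendsto
      simp only [add_zero] at this
      exact this (Iio_mem_nhds hsmall)
    obtain ⟨ε, hε, hball⟩ := Metric.eventually_nhds_iff_ball.mp (hev1.and hev2)
    have hδmem : (ε / 2 : ℝ) ∈ Metric.ball (0 : ℝ) ε := by
      simp only [Metric.mem_ball, dist_zero_right, Real.norm_eq_abs,
        abs_of_pos (half_pos hε)]
      linarith
    obtain ⟨hlt, hlt1⟩ := hball (ε / 2) hδmem
    obtain ⟨κ', hκ'mem, hκ'le⟩ := main (ε / 2) (half_pos hε) hlt1
    calc subregMod (fun x => F x + ({g x} : Set Y)) xb (yb + g xb)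
        ≤ κ' := csInf_le hS'bdd hκ'mem
      _ ≤ (κ₀ + ε / 2) / (1 - (κ₀ + ε / 2) * (lam₀ + ε / 2)) := hκ'le
      _ ≤ c := hlt.le
end

section
/- Let Φ : X ⇉ Y be a positively homogeneous set-valued mapping between normed spaces. Then Φ is strongly metrically subregular at (0, 0) if and only if α(Φ) = inf_{‖u‖=1} dist(0, Φ(u)) > 0, and in that case subreg Φ(0, 0) = 1/α(Φ). -/
open Filter Topology Metric Set ENNReal Pointwise

/-- The injectivity constant `α(Φ) = inf_{‖u‖=1} dist(0, Φ u)` of a set-valued map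
between normed spaces (extended-real-valued; `+∞` over the empty sphere). -/
noncomputable def injConstSV {X Y : Type*}
    [NormedAddCommGroup X] [NormedAddCommGroup Y] (Φ : X → Set Y) : ℝ≥0∞ :=
  ⨅ u : {u : X // ‖u‖ = 1}, EMetric.infEdist (0 : Y) (Φ u.1)

/-! Positive homogeneity makes `x ↦ dist(0, Φ x)` positively homogeneous of degree one, so the
subregularity inequality `‖x‖ ≤ κ · dist(0, Φ x)` holds on a ball around `0` iff it holds on the
unit sphere, i.e. (for `κ > 0`) iff `1/α(Φ) ≤ κ`. So every `κ > 1/α(Φ)` is a modulus and none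
below `1/α(Φ)` is, which gives both the criterion and `subreg Φ(0,0) = 1/α(Φ)`. -/

/-- `IsStronglyMetricallySubregular F xb yb` is `∃ κ, IsSubregBound F xb yb κ`, and
`subregMod F xb yb` is the infimum of all such `κ`. -/
def IsSubregBound {X Y : Type*} [MetricSpace X] [MetricSpace Y]
    (F : X → Set Y) (xb : X) (yb : Y) (κ : ℝ) : Prop :=
  0 ≤ κ ∧ ∃ r : ℝ, 0 < r ∧ ∀ x ∈ Metric.closedBall xb r,
    ENNReal.ofReal (dist x xb) ≤ ENNReal.ofReal κ * infEDist yb (F x)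

def IsPosHomogeneous {X Y : Type*} [AddCommGroup X] [Module ℝ X] [AddCommGroup Y] [Module ℝ Y]
    (Φ : X → Set Y) : Prop :=
  ∀ t : ℝ, 0 < t → ∀ x : X, Φ (t • x) = t • Φ x

section

variable {X Y : Type*} [NormedAddCommGroup X] [NormedAddCommGroup Y] {Φ : X → Set Y}

theorem inv_injConstSV_le_of_forall_sphere {c : ℝ≥0∞}
    (h : ∀ u : X, ‖u‖ = 1 → 1 ≤ c * infEDist (0 : Y) (Φ u)) : (injConstSV Φ)⁻¹ ≤ c := by
  rw [ENNReal.inv_le_iff_inv_le]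
  refine le_iInf fun u => ?_
  have hne := mul_ne_zero_iff.1 (one_pos.trans_le (h u.1 u.2)).ne'
  exact (ENNReal.inv_le_iff_le_mul (fun _ => hne.1) (fun _ => hne.2)).2 (h u.1 u.2)

theorem forall_sphere_of_inv_injConstSV_le {c : ℝ≥0∞} (hc0 : c ≠ 0) (hc : c ≠ ⊤)
    (h : (injConstSV Φ)⁻¹ ≤ c) (u : X) (hu : ‖u‖ = 1) :
    1 ≤ c * infEDist (0 : Y) (Φ u) := by
  refine (ENNReal.inv_le_iff_le_mul (fun _ => hc0) (fun h => absurd h hc)).1 ?_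
  exact (ENNReal.inv_le_iff_inv_le.1 h).trans (iInf_le _ (⟨u, hu⟩ : {v : X // ‖v‖ = 1}))

variable [NormedSpace ℝ X] [NormedSpace ℝ Y]

theorem infEDist_zero_smul_of_pos {t : ℝ} (ht : 0 < t) (s : Set Y) :
    infEDist (0 : Y) (t • s) = ENNReal.ofReal t * infEDist (0 : Y) s := by
  have h := infEDist_smul₀ ht.ne' s (0 : Y)
  rwa [smul_zero, ENNReal.smul_def, smul_eq_mul, ← enorm_eq_nnnorm,
    Real.enorm_eq_ofReal ht.le] at h

theorem IsPosHomogeneous.infEDist_zero_smul (hΦ : IsPosHomogeneous Φ) {t : ℝ} (ht : 0 < t)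
    (x : X) : infEDist (0 : Y) (Φ (t • x)) = ENNReal.ofReal t * infEDist (0 : Y) (Φ x) := by
  rw [hΦ t ht, infEDist_zero_smul_of_pos ht]

theorem IsPosHomogeneous.forall_closedBall_iff_forall_sphere (hΦ : IsPosHomogeneous Φ)
    {r : ℝ} (hr : 0 < r) (c : ℝ≥0∞) :
    (∀ x ∈ closedBall (0 : X) r, ENNReal.ofReal ‖x‖ ≤ c * infEDist (0 : Y) (Φ x)) ↔
      ∀ u : X, ‖u‖ = 1 → 1 ≤ c * infEDist (0 : Y) (Φ u) := by
  constructor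
  · intro h u hu
    have hru : ‖r • u‖ = r := by rw [norm_smul, hu, mul_one, Real.norm_of_nonneg hr.le]
    have hle := h (r • u) (by rw [mem_closedBall_zero_iff, hru])
    rw [hru, hΦ.infEDist_zero_smul hr, mul_left_comm] at hle
    have hr' : ENNReal.ofReal r ≠ 0 := by simpa using hr
    rwa [← ENNReal.mul_le_mul_iff_right hr' ENNReal.ofReal_ne_top, mul_one]
  · intro h x _
    rcases eq_or_ne x 0 with rfl | hx
    · simp
    have hn : 0 < ‖x‖ := norm_pos_iff.mpr hx
    have hu : ‖‖x‖⁻¹ • x‖ = 1 := by rw [norm_smul, norm_inv, norm_norm, inv_mul_cancel₀ hn.ne']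
    -- `x = ‖x‖ • u` with `u` on the unit sphere
    rw [← smul_inv_smul₀ hn.ne' x, hΦ.infEDist_zero_smul hn, smul_inv_smul₀ hn.ne', mul_left_comm]
    exact le_mul_of_one_le_right' (h _ hu)

theorem IsPosHomogeneous.isSubregBound_zero_iff (hΦ : IsPosHomogeneous Φ) (κ : ℝ) :
    IsSubregBound Φ 0 0 κ ↔
      0 ≤ κ ∧ ∀ u : X, ‖u‖ = 1 → 1 ≤ ENNReal.ofReal κ * infEDist (0 : Y) (Φ u) := by
  simp only [IsSubregBound, dist_zero_right]
  refine and_congr_right fun _ => ⟨?_, fun h => ⟨1, one_pos, ?_⟩⟩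
  · rintro ⟨r, hr, h⟩
    exact (hΦ.forall_closedBall_iff_forall_sphere hr _).1 h
  · exact (hΦ.forall_closedBall_iff_forall_sphere one_pos _).2 h

theorem IsPosHomogeneous.inv_injConstSV_le_of_isSubregBound (hΦ : IsPosHomogeneous Φ) {κ : ℝ}
    (hκ : IsSubregBound Φ 0 0 κ) : (injConstSV Φ)⁻¹ ≤ ENNReal.ofReal κ :=
  inv_injConstSV_le_of_forall_sphere ((hΦ.isSubregBound_zero_iff κ).1 hκ).2

theorem IsPosHomogeneous.isSubregBound_of_inv_injConstSV_le (hΦ : IsPosHomogeneous Φ) {κ : ℝ}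
    (hκ : 0 < κ) (h : (injConstSV Φ)⁻¹ ≤ ENNReal.ofReal κ) : IsSubregBound Φ 0 0 κ :=
  (hΦ.isSubregBound_zero_iff κ).2
    ⟨hκ.le, forall_sphere_of_inv_injConstSV_le (by simpa using hκ) ENNReal.ofReal_ne_top h⟩

theorem IsPosHomogeneous.isStronglyMetricallySubregular_iff (hΦ : IsPosHomogeneous Φ) :
    IsStronglyMetricallySubregular Φ 0 0 ↔ 0 < injConstSV Φ := by
  rw [pos_iff_ne_zero, ← ENNReal.inv_ne_top]
  constructor
  · rintro ⟨κ, hκ⟩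
    exact ne_top_of_le_ne_top ENNReal.ofReal_ne_top (hΦ.inv_injConstSV_le_of_isSubregBound hκ)
  · intro hα
    have hκ : 0 < (injConstSV Φ)⁻¹.toReal + 1 := by positivity
    refine ⟨_, hΦ.isSubregBound_of_inv_injConstSV_le hκ ?_⟩
    exact (ENNReal.le_ofReal_iff_toReal_le hα hκ.le).2 (by linarith)

theorem IsPosHomogeneous.subregMod_eq (hΦ : IsPosHomogeneous Φ) (hα : 0 < injConstSV Φ) :
    subregMod Φ 0 0 = (injConstSV Φ)⁻¹.toReal := by
  have hα' : (injConstSV Φ)⁻¹ ≠ ⊤ := ENNReal.inv_ne_top.2 hα.ne'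
  set t := (injConstSV Φ)⁻¹.toReal
  have hmem : ∀ κ, t < κ → IsSubregBound Φ 0 0 κ := fun κ hκ =>
    have hκ0 : 0 < κ := ENNReal.toReal_nonneg.trans_lt hκ
    hΦ.isSubregBound_of_inv_injConstSV_le hκ0
      ((ENNReal.le_ofReal_iff_toReal_le hα' hκ0.le).2 hκ.le)
  refine csInf_eq_of_forall_ge_of_forall_gt_exists_lt ⟨t + 1, hmem _ (by linarith)⟩ ?_ ?_
  · intro κ hκ
    exact ENNReal.toReal_le_of_le_ofReal hκ.1 (hΦ.inv_injConstSV_le_of_isSubregBound hκ)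
  · intro w hw
    exact ⟨(t + w) / 2, hmem _ (by linarith), by linarith⟩

end

theorem strong_subreg_posHom_iff_general {X Y : Type*}
    [NormedAddCommGroup X] [NormedSpace ℝ X] [NormedAddCommGroup Y] [NormedSpace ℝ Y]
    (Φ : X → Set Y)
    (hΦh : ∀ t : ℝ, 0 < t → ∀ x : X, Φ (t • x) = t • Φ x) :
    (IsStronglyMetricallySubregular Φ (0 : X) (0 : Y) ↔ 0 < injConstSV Φ) ∧
    (0 < injConstSV Φ →
      ENNReal.ofReal (subregMod Φ (0 : X) (0 : Y)) = 1 / injConstSV Φ) := by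
  have hΦ : IsPosHomogeneous Φ := hΦh
  refine ⟨hΦ.isStronglyMetricallySubregular_iff, fun hα => ?_⟩
  rw [hΦ.subregMod_eq hα, one_div, ENNReal.ofReal_toReal (ENNReal.inv_ne_top.2 hα.ne')]

/-- A positively homogeneous set-valued map `Φ` between normed
spaces is strongly metrically subregular at `(0, 0)` iff `α(Φ) > 0`, in which case
`subreg Φ(0, 0) = 1/α(Φ)`. -/
theorem strong_subreg_posHom_iff {X Y : Type*}
    [NormedAddCommGroup X] [NormedSpace ℝ X] [NormedAddCommGroup Y] [NormedSpace ℝ Y]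
    (Φ : X → Set Y) (hΦ0 : (0 : Y) ∈ Φ 0)
    (hΦh : ∀ t : ℝ, 0 < t → ∀ x : X, Φ (t • x) = t • Φ x) :
    (IsStronglyMetricallySubregular Φ (0 : X) (0 : Y) ↔ 0 < injConstSV Φ) ∧
    (0 < injConstSV Φ →
      ENNReal.ofReal (subregMod Φ (0 : X) (0 : Y)) = 1 / injConstSV Φ) :=
  strong_subreg_posHom_iff_general Φ hΦh
end

section
/- Consider the generalized equation 0 ∈ f(p, x) + T(x) with f : P × X → Y (P a metric space, X, Y normed spaces), T : X ⇉ Y, solution mapping S(p) = {x ∈ X : 0 ∈ f(p, x) + T(x)}, and let x̄ ∈ S(p̄). Suppose: (i) T is single-valued near x̄ and calm at x̄ with modulus clm T(x̄); (ii) f(·, x) is calm at p̄ uniformly with respect to x near x̄, i.e. there exist κ_p ≥ 0, ζ > 0 and ρ > 0 with ‖f(p, x) − f(p̄, x)‖ ≤ κ_p d(p, p̄) for all p ∈ B(p̄, ζ) and x ∈ B(x̄, ρ); (iii) Y is partially ordered by a convex cone Y₊ and f(p̄, ·) is Y₊-convex; (iv) 0 ∈ int ∂(y*∘f(p̄,·))(x̄)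 for some y* ∈ S* ∩ Y₊*, and clm T(x̄) / intrad f(p̄,·)(x̄) < 1, where intrad f(p̄,·)(x̄) = sup{ρ' > 0 : ρ'B* ⊆ ∂(y*∘f(p̄,·))(x̄) for some y* ∈ S* ∩ Y₊*}. Then S has the isolated calmness property at (p̄, x̄) and clm S(p̄, x̄) ≤ κ_p / (intrad f(p̄,·)(x̄) − clm T(x̄)). -/
open Filter Topology Metric Set ENNReal Pointwise

/-- Calmness of a set-valued map `G : P ⇉ X` at `(pb, xb) ∈ graph G`. -/
def IsCalmSV {P X : Type*} [MetricSpace P] [MetricSpace X]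
    (G : P → Set X) (pb : P) (xb : X) : Prop :=
  ∃ κ : ℝ, 0 ≤ κ ∧ ∃ r : ℝ, 0 < r ∧ ∀ p ∈ Metric.closedBall pb r,
    ∀ x ∈ G p ∩ Metric.closedBall xb r,
      EMetric.infEdist x (G pb) ≤ ENNReal.ofReal (κ * dist p pb)

/-- The calmness modulus of a set-valued map `G : P ⇉ X` at `(pb, xb)`. -/
noncomputable def clmModSV {P X : Type*} [MetricSpace P] [MetricSpace X]
    (G : P → Set X) (pb : P) (xb : X) : ℝ :=
  sInf {κ : ℝ | 0 ≤ κ ∧ ∃ r : ℝ, 0 < r ∧ ∀ p ∈ Metric.closedBall pb r,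
    ∀ x ∈ G p ∩ Metric.closedBall xb r,
      EMetric.infEdist x (G pb) ≤ ENNReal.ofReal (κ * dist p pb)}

/-- Calmness modulus of a single-valued map between normed spaces at `xb`. -/
noncomputable def clmModMapN {X Y : Type*}
    [NormedAddCommGroup X] [NormedAddCommGroup Y] (t : X → Y) (xb : X) : ℝ :=
  sInf {κ : ℝ | 0 ≤ κ ∧ ∃ r : ℝ, 0 < r ∧ ∀ x ∈ Metric.closedBall xb r,
    ‖t x - t xb‖ ≤ κ * ‖x - xb‖}

/-- The convex subdifferential of a real-valued function `ψ` at `xb`. -/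
def convexSubdiffR {X : Type*} [NormedAddCommGroup X] [NormedSpace ℝ X]
    (ψ : X → ℝ) (xb : X) : Set (StrongDual ℝ X) :=
  {p | ∀ x : X, ψ xb + p (x - xb) ≤ ψ x}

/-- `intrad g(xb) = sup{ρ > 0 : ρ·B* ⊆ ∂(y*∘g)(xb) for some y* ∈ S* ∩ Y₊*}`. -/
noncomputable def intrad {X Y : Type*}
    [NormedAddCommGroup X] [NormedSpace ℝ X] [NormedAddCommGroup Y] [NormedSpace ℝ Y]
    (C : Set Y) (g : X → Y) (xb : X) : ℝ :=
  sSup {ρ : ℝ | 0 < ρ ∧ ∃ q : StrongDual ℝ Y, ‖q‖ = 1 ∧ (∀ y ∈ C, 0 ≤ q y) ∧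
    ∀ p : StrongDual ℝ X, ‖p‖ ≤ ρ → p ∈ convexSubdiffR (fun x => q (g x)) xb}

/-! If `ρ • B* ⊆ ∂(y* ∘ g)(xb)` with `‖y*‖ = 1`, testing the subgradient inequality against
`ρ • φ`, `φ` a norming functional of `x - xb`, gives the sharp growth
`ρ ‖x - xb‖ ≤ ‖g x - g xb‖`. For `g = f (pb, ·)` and a solution `x` of the perturbed
equation, `g x - g xb = (f (pb, x) - f (p, x)) + (t xb - t x)`, hence
`(ρ - κt) ‖x - xb‖ ≤ κp d(p, pb)` whenever `κt` is a calmness constant of `t`. This is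
isolated calmness with constant `κp / (ρ - κt)`, and letting `ρ ↑ intrad` and `κt ↓ clm t`
gives the modulus estimate. -/

section Sets

variable {P X Y : Type*}

def calmConstsSV [MetricSpace P] [MetricSpace X] (G : P → Set X) (pb : P) (xb : X) :
    Set ℝ :=
  {κ : ℝ | 0 ≤ κ ∧ ∃ r : ℝ, 0 < r ∧ ∀ p ∈ Metric.closedBall pb r,
    ∀ x ∈ G p ∩ Metric.closedBall xb r,
      Metric.infEDist x (G pb) ≤ ENNReal.ofReal (κ * dist p pb)}

def calmConstsMapN [NormedAddCommGroup X] [NormedAddCommGroup Y] (t : X → Y) (xb : X) :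
    Set ℝ :=
  {κ : ℝ | 0 ≤ κ ∧ ∃ r : ℝ, 0 < r ∧ ∀ x ∈ Metric.closedBall xb r,
    ‖t x - t xb‖ ≤ κ * ‖x - xb‖}

def intradSet [NormedAddCommGroup X] [NormedSpace ℝ X] [NormedAddCommGroup Y]
    [NormedSpace ℝ Y] (C : Set Y) (g : X → Y) (xb : X) : Set ℝ :=
  {ρ : ℝ | 0 < ρ ∧ ∃ q : StrongDual ℝ Y, ‖q‖ = 1 ∧ (∀ y ∈ C, 0 ≤ q y) ∧
    ∀ p : StrongDual ℝ X, ‖p‖ ≤ ρ → p ∈ convexSubdiffR (fun x => q (g x)) xb}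

end Sets

theorem csSup_sub_csInf_le {α : Type*} [ConditionallyCompleteLattice α] [AddCommGroup α]
    [IsOrderedAddMonoid α] {A B : Set α} {m : α} (hA : A.Nonempty) (hB : B.Nonempty)
    (h : ∀ a ∈ A, ∀ b ∈ B, a - b ≤ m) : sSup A - sInf B ≤ m := by
  rw [sub_le_comm]
  refine le_csInf hB fun b hb => sub_le_iff_le_add.2 <| csSup_le hA fun a ha => ?_
  exact sub_le_iff_le_add'.1 (h a ha b hb)

theorem csInf_le_div_csSup_sub_csInf {A B K : Set ℝ} {k : ℝ} (hk : 0 ≤ k)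
    (hA : A.Nonempty) (hB : B.Nonempty) (hK : BddBelow K) (hlt : sInf B < sSup A)
    (hmem : ∀ a ∈ A, ∀ b ∈ B, b < a → k / (a - b) ∈ K) :
    sInf K ≤ k / (sSup A - sInf B) := by
  rw [le_div_iff₀ (sub_pos.2 hlt)]
  rcases le_or_gt (sInf K) 0 with hc | hc
  · nlinarith [sub_pos.2 hlt]
  rw [← le_div_iff₀' hc]
  refine csSup_sub_csInf_le hA hB fun a ha b hb => ?_
  rcases le_or_gt a b with hab | hab
  · exact (sub_nonpos.2 hab).trans (div_nonneg hk hc.le)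
  rw [le_div_iff₀' hc, ← le_div_iff₀ (sub_pos.2 hab)]
  exact csInf_le hK (hmem a ha b hb hab)

section Calmness

variable {P X : Type*} [MetricSpace P] [MetricSpace X] {G : P → Set X} {pb : P} {xb : X}
  {κ r : ℝ}

theorem mem_calmConstsSV_of_dist_le (hxb : xb ∈ G pb) (hκ : 0 ≤ κ) (hr : 0 < r)
    (h : ∀ p ∈ Metric.closedBall pb r, ∀ x ∈ G p ∩ Metric.closedBall xb r,
      dist x xb ≤ κ * dist p pb) :
    κ ∈ calmConstsSV G pb xb :=
  ⟨hκ, r, hr, fun p hp x hx => (Metric.infEDist_le_edist_of_mem hxb).trans <| by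
    rw [edist_dist]; exact ENNReal.ofReal_le_ofReal (h p hp x hx)⟩

theorem inter_closedBall_subset_singleton_of_dist_le (hr : 0 < r)
    (h : ∀ p ∈ Metric.closedBall pb r, ∀ x ∈ G p ∩ Metric.closedBall xb r,
      dist x xb ≤ κ * dist p pb) :
    G pb ∩ Metric.closedBall xb r ⊆ {xb} := fun x hx =>
  dist_le_zero.1 <| by simpa using h pb (Metric.mem_closedBall_self hr.le) x hx

theorem bddBelow_calmConstsSV : BddBelow (calmConstsSV G pb xb) :=
  ⟨0, fun _ hκ => hκ.1⟩

theorem clmModSV_le_of_mem (h : κ ∈ calmConstsSV G pb xb) : clmModSV G pb xb ≤ κ :=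
  csInf_le bddBelow_calmConstsSV h

end Calmness

theorem clmModMapN_of_subsingleton {X Y : Type*} [NormedAddCommGroup X] [NormedAddCommGroup Y]
    [Subsingleton X] (t : X → Y) (xb : X) : clmModMapN t xb = 0 :=
  le_antisymm
    (csInf_le ⟨0, fun _ hκ => hκ.1⟩
      ⟨le_rfl, 1, one_pos, fun x _ => by simp [Subsingleton.elim x xb]⟩)
    (Real.sInf_nonneg fun _ hκ => hκ.1)

section Subdifferential

variable {X Y : Type*} [NormedAddCommGroup X] [NormedSpace ℝ X] [NormedAddCommGroup Y]
  [NormedSpace ℝ Y] {C : Set Y} {g : X → Y} {xb : X} {ρ : ℝ}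

theorem add_mul_norm_sub_le_of_forall_norm_le_mem_convexSubdiffR {ψ : X → ℝ} (hρ : 0 ≤ ρ)
    (h : ∀ p : StrongDual ℝ X, ‖p‖ ≤ ρ → p ∈ convexSubdiffR ψ xb) (x : X) :
    ψ xb + ρ * ‖x - xb‖ ≤ ψ x := by
  obtain ⟨φ, hφ, hφx⟩ := exists_dual_vector'' ℝ (x - xb)
  have hnorm : ‖ρ • φ‖ ≤ ρ := by
    rw [norm_smul, Real.norm_of_nonneg hρ]
    exact mul_le_of_le_one_right hρ hφ
  simpa [hφx] using h (ρ • φ) hnorm x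

theorem intrad_nonneg : 0 ≤ intrad C g xb :=
  Real.sSup_nonneg fun _ hρ => hρ.1.le

theorem mul_norm_sub_le_of_mem_intradSet (hρ : ρ ∈ intradSet C g xb) (x : X) :
    ρ * ‖x - xb‖ ≤ ‖g x - g xb‖ := by
  obtain ⟨hρ0, q, hq, -, hsub⟩ := hρ
  have hgrow := add_mul_norm_sub_le_of_forall_norm_le_mem_convexSubdiffR hρ0.le hsub x
  have hq' : q (g x - g xb) ≤ ‖g x - g xb‖ :=
    (le_abs_self _).trans (by simpa using q.le_of_opNorm_le hq.le (g x - g xb))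
  rw [map_sub] at hq'
  linarith

theorem bddAbove_intradSet [Nontrivial X] : BddAbove (intradSet C g xb) := by
  obtain ⟨x, hx⟩ := exists_ne xb
  have hpos : 0 < ‖x - xb‖ := norm_pos_iff.2 (sub_ne_zero.2 hx)
  exact ⟨‖g x - g xb‖ / ‖x - xb‖, fun ρ hρ =>
    (le_div_iff₀ hpos).2 (mul_norm_sub_le_of_mem_intradSet hρ x)⟩

theorem intradSet_nonempty {q : StrongDual ℝ Y} (hq : ‖q‖ = 1) (hqC : ∀ y ∈ C, 0 ≤ q y)
    (h0 : (0 : StrongDual ℝ X) ∈ interior (convexSubdiffR (fun x => q (g x)) xb)) :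
    (intradSet C g xb).Nonempty := by
  obtain ⟨ε, hε, hball⟩ := Metric.mem_nhds_iff.1 (mem_interior_iff_mem_nhds.1 h0)
  refine ⟨ε / 2, half_pos hε, q, hq, hqC, fun p hp => hball ?_⟩
  rw [Metric.mem_ball, dist_zero_right]
  linarith

end Subdifferential

section GeneralizedEquation

variable {P X Y : Type*} [NormedAddCommGroup X] [NormedSpace ℝ X] [NormedAddCommGroup Y]
  [NormedSpace ℝ Y] {C : Set Y} {xb : X} {ρ' κt : ℝ}

theorem sub_mul_norm_sub_le_of_add_eq_zero {g h t : X → Y} {x : X} {a : ℝ}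
    (hρ' : ρ' ∈ intradSet C g xb) (hx : h x + t x = 0) (hxb : g xb + t xb = 0)
    (hgh : ‖h x - g x‖ ≤ a) (ht : ‖t x - t xb‖ ≤ κt * ‖x - xb‖) :
    (ρ' - κt) * ‖x - xb‖ ≤ a := by
  have hsplit : g x - g xb = (g x - h x) + (t xb - t x) := by
    rw [eq_neg_of_add_eq_zero_left hx, eq_neg_of_add_eq_zero_left hxb]
    abel
  have hgrow := mul_norm_sub_le_of_mem_intradSet hρ' x
  have htri : ‖g x - g xb‖ ≤ ‖h x - g x‖ + ‖t x - t xb‖ := by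
    rw [hsplit, norm_sub_rev (h x), norm_sub_rev (t x)]
    exact norm_add_le _ _
  linarith

theorem exists_dist_le_of_mem_solution [MetricSpace P] {f : P × X → Y} {t : X → Y}
    {S : P → Set X} {pb : P} {ρ₀ ζ ρ κp : ℝ} (hρ₀ : 0 < ρ₀) (hζ : 0 < ζ) (hρ : 0 < ρ)
    (hSeq : ∀ p, ∀ x ∈ Metric.closedBall xb ρ₀, x ∈ S p → f (p, x) + t x = 0)
    (hxb : f (pb, xb) + t xb = 0)
    (hfp : ∀ p ∈ Metric.closedBall pb ζ, ∀ x ∈ Metric.closedBall xb ρ,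
      ‖f (p, x) - f (pb, x)‖ ≤ κp * dist p pb)
    (hρ' : ρ' ∈ intradSet C (fun x => f (pb, x)) xb) (hκt : κt ∈ calmConstsMapN t xb)
    (hlt : κt < ρ') :
    ∃ r > 0, ∀ p ∈ Metric.closedBall pb r, ∀ x ∈ S p ∩ Metric.closedBall xb r,
      dist x xb ≤ κp / (ρ' - κt) * dist p pb := by
  obtain ⟨-, rt, hrt, hcalm⟩ := hκt
  refine ⟨min ζ (min ρ₀ (min ρ rt)), by positivity, fun p hp x ⟨hxS, hx⟩ => ?_⟩
  have hball {s : ℝ} (hs : min ζ (min ρ₀ (min ρ rt)) ≤ s) : x ∈ Metric.closedBall xb s :=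
    Metric.closedBall_subset_closedBall hs hx
  have hest := sub_mul_norm_sub_le_of_add_eq_zero (h := fun x => f (p, x)) hρ'
    (hSeq p x (hball (by simp)) hxS) hxb
    (hfp p (Metric.closedBall_subset_closedBall (min_le_left _ _) hp) x (hball (by simp)))
    (hcalm x (hball (by simp)))
  rw [div_mul_eq_mul_div, le_div_iff₀ (sub_pos.2 hlt), dist_eq_norm]
  linarith

end GeneralizedEquation

theorem isolated_calmness_of_solution_mapping_scalarized_general {P X Y : Type*} [MetricSpace P]
    [NormedAddCommGroup X] [NormedSpace ℝ X] [NormedAddCommGroup Y] [NormedSpace ℝ Y]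
    (f : P × X → Y) (T : X → Set Y) (pb : P) (xb : X)
    (S : P → Set X) (hS : S = fun p => {x | (0 : Y) ∈ ({f (p, x)} : Set Y) + T x})
    (hsol : xb ∈ S pb)
    -- (i) T single-valued near xb, calm at xb
    (t : X → Y) (ρ₀ : ℝ) (hρ₀ : 0 < ρ₀)
    (hT : ∀ x ∈ Metric.closedBall xb ρ₀, T x = {t x})
    (htcalm : ∃ κ : ℝ, 0 ≤ κ ∧ ∃ r : ℝ, 0 < r ∧ ∀ x ∈ Metric.closedBall xb r,
      ‖t x - t xb‖ ≤ κ * ‖x - xb‖)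
    -- (ii) calmness of f(·, x) at pb, uniformly in x near xb
    (κp : ℝ) (hκp : 0 ≤ κp) (ζ : ℝ) (hζ : 0 < ζ) (ρ : ℝ) (hρ : 0 < ρ)
    (hfp : ∀ p ∈ Metric.closedBall pb ζ, ∀ x ∈ Metric.closedBall xb ρ,
      ‖f (p, x) - f (pb, x)‖ ≤ κp * dist p pb)
    -- (iii) Y partially ordered by a convex cone C and f(pb, ·) is C-convex
    (C : Set Y)
    -- (iv) scalarized interiority and smallness conditions
    (hq : ∃ q : StrongDual ℝ Y, ‖q‖ = 1 ∧ (∀ y ∈ C, 0 ≤ q y) ∧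
      (0 : StrongDual ℝ X) ∈
        interior (convexSubdiffR (fun x => q (f (pb, x))) xb))
    (hlt : clmModMapN t xb / intrad C (fun x => f (pb, x)) xb < 1) :
    (IsCalmSV S pb xb ∧ ∃ ρ' : ℝ, 0 < ρ' ∧ S pb ∩ Metric.closedBall xb ρ' ⊆ {xb}) ∧
    clmModSV S pb xb ≤
      κp / (intrad C (fun x => f (pb, x)) xb - clmModMapN t xb) := by
  have hSeq : ∀ p, ∀ x ∈ Metric.closedBall xb ρ₀, x ∈ S p → f (p, x) + t x = 0 :=
    fun p x hx hxS => by
      simp only [hS, Set.mem_ofPred_eq, hT x hx, Set.singleton_add_singleton,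
        Set.mem_singleton_iff] at hxS
      exact hxS.symm
  rcases subsingleton_or_nontrivial X with hX | hX
  · -- `intrad` is then the junk `sSup` of an unbounded set
    have h0 : (0 : ℝ) ∈ calmConstsSV S pb xb :=
      mem_calmConstsSV_of_dist_le hsol le_rfl one_pos fun p _ x _ => by
        simp [Subsingleton.elim x xb]
    refine ⟨⟨⟨0, h0⟩, 1, one_pos, fun x _ => Subsingleton.elim x xb⟩, ?_⟩
    rw [clmModMapN_of_subsingleton, sub_zero]
    exact (clmModSV_le_of_mem h0).trans (div_nonneg hκp intrad_nonneg)
  obtain ⟨q, hq1, hqC, hq0⟩ := hq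
  have hne := intradSet_nonempty hq1 hqC hq0
  have hτR : clmModMapN t xb < intrad C (fun x => f (pb, x)) xb := by
    obtain ⟨ρ', hρ'⟩ := hne
    exact (div_lt_one (lt_csSup_of_lt bddAbove_intradSet hρ' hρ'.1)).1 hlt
  have hxb := hSeq pb xb (Metric.mem_closedBall_self hρ₀.le) hsol
  obtain ⟨ρ', hρ', hρ'gt⟩ := exists_lt_of_lt_csSup hne hτR
  obtain ⟨κt, hκt, hκtlt⟩ := exists_lt_of_csInf_lt htcalm hρ'gt
  obtain ⟨r, hr, hdist⟩ := exists_dist_le_of_mem_solution hρ₀ hζ hρ hSeq hxb hfp hρ' hκt hκtlt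
  refine ⟨⟨⟨_, mem_calmConstsSV_of_dist_le hsol (div_nonneg hκp (sub_pos.2 hκtlt).le) hr hdist⟩,
    r, hr, inter_closedBall_subset_singleton_of_dist_le hr hdist⟩, ?_⟩
  refine csInf_le_div_csSup_sub_csInf hκp hne htcalm bddBelow_calmConstsSV hτR
    fun ρ' hρ' κt hκt hlt => ?_
  obtain ⟨r, hr, hdist⟩ := exists_dist_le_of_mem_solution hρ₀ hζ hρ hSeq hxb hfp hρ' hκt hlt
  exact mem_calmConstsSV_of_dist_le hsol (div_nonneg hκp (sub_pos.2 hlt).le) hr hdist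

/-- Isolated calmness via scalarization for the solution mapping
`S(p) = {x : 0 ∈ f(p, x) + T(x)}` of a generalized equation whose field `T` is
single-valued and calm near `xb`, and whose base `f(pb, ·)` is `Y₊`-convex with
`0 ∈ int ∂(y*∘f(pb,·))(xb)` for some `y* ∈ S* ∩ Y₊*` and
`clm T(xb)/intrad f(pb,·)(xb) < 1`; with the corresponding modulus estimate. -/
theorem isolated_calmness_of_solution_mapping_scalarized {P X Y : Type*} [MetricSpace P]
    [NormedAddCommGroup X] [NormedSpace ℝ X] [NormedAddCommGroup Y] [NormedSpace ℝ Y]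
    (f : P × X → Y) (T : X → Set Y) (pb : P) (xb : X)
    (S : P → Set X) (hS : S = fun p => {x | (0 : Y) ∈ ({f (p, x)} : Set Y) + T x})
    (hsol : xb ∈ S pb)
    -- (i) T single-valued near xb, calm at xb
    (t : X → Y) (ρ₀ : ℝ) (hρ₀ : 0 < ρ₀)
    (hT : ∀ x ∈ Metric.closedBall xb ρ₀, T x = {t x})
    (htcalm : ∃ κ : ℝ, 0 ≤ κ ∧ ∃ r : ℝ, 0 < r ∧ ∀ x ∈ Metric.closedBall xb r,
      ‖t x - t xb‖ ≤ κ * ‖x - xb‖)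
    -- (ii) calmness of f(·, x) at pb, uniformly in x near xb
    (κp : ℝ) (hκp : 0 ≤ κp) (ζ : ℝ) (hζ : 0 < ζ) (ρ : ℝ) (hρ : 0 < ρ)
    (hfp : ∀ p ∈ Metric.closedBall pb ζ, ∀ x ∈ Metric.closedBall xb ρ,
      ‖f (p, x) - f (pb, x)‖ ≤ κp * dist p pb)
    -- (iii) Y partially ordered by a convex cone C and f(pb, ·) is C-convex
    (C : Set Y) (hCconv : Convex ℝ C) (hCcone : ∀ c : ℝ, 0 < c → ∀ y ∈ C, c • y ∈ C)
    (hfconv : ∀ x₁ x₂ : X, ∀ s : ℝ, 0 ≤ s → s ≤ 1 →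
      s • f (pb, x₁) + (1 - s) • f (pb, x₂) - f (pb, s • x₁ + (1 - s) • x₂) ∈ C)
    -- (iv) scalarized interiority and smallness conditions
    (hq : ∃ q : StrongDual ℝ Y, ‖q‖ = 1 ∧ (∀ y ∈ C, 0 ≤ q y) ∧
      (0 : StrongDual ℝ X) ∈
        interior (convexSubdiffR (fun x => q (f (pb, x))) xb))
    (hlt : clmModMapN t xb / intrad C (fun x => f (pb, x)) xb < 1) :
    (IsCalmSV S pb xb ∧ ∃ ρ' : ℝ, 0 < ρ' ∧ S pb ∩ Metric.closedBall xb ρ' ⊆ {xb}) ∧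
    clmModSV S pb xb ≤
      κp / (intrad C (fun x => f (pb, x)) xb - clmModMapN t xb) :=
  isolated_calmness_of_solution_mapping_scalarized_general f T pb xb S hS hsol t ρ₀ hρ₀ hT htcalm κp
    hκp ζ hζ ρ hρ hfp C hq hlt
end
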